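/- arXiv:2308.06626 — 9 statements merged into one kernel-verified Lean document; each statement's English description precedes it below -/
import Mathlib

section
/- Let T be a tree (a connected acyclic simple graph) with vertex set X, let l : X → [0,∞) be a labeling, and let d_l be defined by d_l(u,v) = 0 if u = v and d_l(u,v) = max{l(w) : w a vertex of the unique path in T joining u and v} if u ≠ v. Then d_l is an ultrametric on X (i.e., a metric satisfying the strong triangle inequality) if and only if max{l(u), l(v)} > 0 holds for every edge {u,v} of T. -/
/-- `d` is an ultrametric on `X`: a nonnegative, symmetric function vanishing
exactly on the diagonal and satisfying the strong triangle inequality. -/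
def IsUltrametricOn {X : Type*} (d : X → X → ℝ) : Prop :=
  (∀ x y, 0 ≤ d x y) ∧ (∀ x y, d x y = d y x) ∧
  (∀ x y, d x y = 0 ↔ x = y) ∧
  (∀ x y z, d x y ≤ max (d x z) (d z y))

/-- `B` is an open ball of the space `(X, d)`. -/
def IsOpenBallOf {X : Type*} (d : X → X → ℝ) (B : Set X) : Prop :=
  ∃ c : X, ∃ r : ℝ, 0 < r ∧ B = {x | d c x < r}

/-- `C` is a centered sphere of the space `(X, d)`. -/
def IsCenteredSphereOf {X : Type*} (d : X → X → ℝ) (C : Set X) : Prop :=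
  ∃ c ∈ C, ∃ r : ℝ, 0 ≤ r ∧ C = {x | d x c = r} ∪ {c}

/-- The diameter `sup {d x y : x, y ∈ A}` of a subset `A` of `(X, d)`. -/
noncomputable def setDiam {X : Type*} (d : X → X → ℝ) (A : Set X) : ℝ :=
  sSup {r | ∃ x ∈ A, ∃ y ∈ A, r = d x y}

/-- A space is locally finite if all of its open balls are finite sets. -/
def IsLocallyFiniteOn {X : Type*} (d : X → X → ℝ) : Prop :=
  ∀ B : Set X, IsOpenBallOf d B → B.Finite

/-- The maximum of the (nonnegative) labels of the vertices of a walk `p`. -/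
def walkMax {X : Type*} {T : SimpleGraph X} (l : X → ℝ) {u v : X} (p : T.Walk u v) : ℝ :=
  (p.support.map l).foldr max 0

/-- The function `d` is generated by the tree `T` with nonnegative vertex labeling `l`,
i.e. `d u u = 0` and, for `u ≠ v`, `d u v` is the maximum of the labels of the vertices
on the (unique) path joining `u` and `v` in `T`. -/
def GeneratedBy {X : Type*} (d : X → X → ℝ) (T : SimpleGraph X) (l : X → ℝ) : Prop :=
  T.IsTree ∧ (∀ x, 0 ≤ l x) ∧ (∀ u, d u u = 0) ∧
  ∀ u v : X, u ≠ v → ∀ p : T.Walk u v, p.IsPath → d u v = walkMax l p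

/-- `(X, d)` belongs to the class UGVL: it is generated by some labeled tree. -/
def IsUGVL {X : Type*} (d : X → X → ℝ) : Prop :=
  ∃ (T : SimpleGraph X) (l : X → ℝ), GeneratedBy d T l

/-!
Every value `d x y` with `x ≠ y` is the largest label on a path from `x` to `y`. The strong
triangle inequality holds because the path from `x` to `y` is obtained from the concatenation
of the paths `x → z → y` by deleting detours, so it visits no new vertices. The only axiom that
can fail is `d x y = 0 → x = y`: a path between distinct vertices starts with an edge, so its
label maximum is positive as soon as every edge carries a positive label, and conversely the
one-edge path from `u` to `v` has label maximum `max (l u) (max (l v) 0)`.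
-/

open SimpleGraph

theorem List.foldr_max_le_iff {α : Type*} [LinearOrder α] {L : List α} {c b : α} :
    L.foldr max c ≤ b ↔ c ≤ b ∧ ∀ a ∈ L, a ≤ b := by
  induction L with
  | nil => simp
  | cons a L ih => simp only [List.foldr_cons, max_le_iff, ih, List.forall_mem_cons]; tauto

section WalkMax

variable {X : Type*} {T : SimpleGraph X} (l : X → ℝ) {u v w : X}

theorem walkMax_le_iff {p : T.Walk u v} {b : ℝ} :
    walkMax l p ≤ b ↔ 0 ≤ b ∧ ∀ w ∈ p.support, l w ≤ b := by
  simp [walkMax, List.foldr_max_le_iff]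

theorem walkMax_nonneg (p : T.Walk u v) : 0 ≤ walkMax l p :=
  ((walkMax_le_iff l).1 le_rfl).1

theorem le_walkMax {p : T.Walk u v} (hw : w ∈ p.support) : l w ≤ walkMax l p :=
  ((walkMax_le_iff l).1 le_rfl).2 w hw

theorem walkMax_pos_iff {p : T.Walk u v} : 0 < walkMax l p ↔ ∃ w ∈ p.support, 0 < l w := by
  simp [← not_le, walkMax_le_iff]

theorem walkMax_mono {u' v' : X} {p : T.Walk u v} {q : T.Walk u' v'}
    (h : p.support ⊆ q.support) : walkMax l p ≤ walkMax l q :=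
  (walkMax_le_iff l).2 ⟨walkMax_nonneg l q, fun _ hw ↦ le_walkMax l (h hw)⟩

theorem walkMax_reverse (p : T.Walk u v) : walkMax l p.reverse = walkMax l p :=
  le_antisymm (walkMax_mono l (by simp [Walk.support_reverse]))
    (walkMax_mono l (by simp [Walk.support_reverse]))

theorem walkMax_bypass_append_le [DecidableEq X] (p : T.Walk u w) (q : T.Walk w v) :
    walkMax l (p.append q).bypass ≤ max (walkMax l p) (walkMax l q) := by
  refine (walkMax_le_iff l).2 ⟨le_max_of_le_left (walkMax_nonneg l p), fun x hx ↦ ?_⟩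
  rcases (Walk.mem_support_append_iff p q).1 (Walk.support_bypass_subset_support _ hx) with
    hx | hx
  · exact le_max_of_le_left (le_walkMax l hx)
  · exact le_max_of_le_right (le_walkMax l hx)

theorem walkMax_toWalk (h : T.Adj u v) :
    walkMax l h.toWalk = max (l u) (max (l v) 0) := rfl

theorem walkMax_pos_of_ne (hedge : ∀ u v, T.Adj u v → 0 < max (l u) (l v))
    (p : T.Walk u v) (huv : u ≠ v) : 0 < walkMax l p := by
  cases p with
  | nil => exact absurd rfl huv
  | cons h q =>
    rw [walkMax_pos_iff]
    rcases lt_max_iff.1 (hedge _ _ h) with hu | hnext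
    · exact ⟨u, Walk.start_mem_support _, hu⟩
    · exact ⟨_, by simp, hnext⟩

end WalkMax

section LabelMetric

variable {X : Type*} {T : SimpleGraph X} {l : X → ℝ} {d : X → X → ℝ}

theorem nonneg_of_eq_walkMax (hT : T.Connected) (hd0 : ∀ u, d u u = 0)
    (hd : ∀ u v : X, u ≠ v → ∀ p : T.Walk u v, p.IsPath → d u v = walkMax l p) (x y : X) :
    0 ≤ d x y := by
  obtain rfl | hxy := eq_or_ne x y
  · exact (hd0 x).ge
  · obtain ⟨p, hp⟩ := hT.preconnected.exists_isPath x y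
    exact hd x y hxy p hp ▸ walkMax_nonneg l p

theorem symm_of_eq_walkMax (hT : T.Connected)
    (hd : ∀ u v : X, u ≠ v → ∀ p : T.Walk u v, p.IsPath → d u v = walkMax l p) (x y : X) :
    d x y = d y x := by
  obtain rfl | hxy := eq_or_ne x y
  · rfl
  · obtain ⟨p, hp⟩ := hT.preconnected.exists_isPath x y
    rw [hd x y hxy p hp, hd y x hxy.symm p.reverse hp.reverse, walkMax_reverse]

theorem eq_zero_iff_of_eq_walkMax (hT : T.Connected) (hd0 : ∀ u, d u u = 0)
    (hd : ∀ u v : X, u ≠ v → ∀ p : T.Walk u v, p.IsPath → d u v = walkMax l p)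
    (hedge : ∀ u v, T.Adj u v → 0 < max (l u) (l v)) (x y : X) :
    d x y = 0 ↔ x = y := by
  refine ⟨fun h ↦ by_contra fun hxy ↦ ?_, fun h ↦ h ▸ hd0 x⟩
  obtain ⟨p, hp⟩ := hT.preconnected.exists_isPath x y
  exact (walkMax_pos_of_ne l hedge p hxy).ne' (hd x y hxy p hp ▸ h)

theorem le_max_of_eq_walkMax (hT : T.Connected) (hd0 : ∀ u, d u u = 0)
    (hd : ∀ u v : X, u ≠ v → ∀ p : T.Walk u v, p.IsPath → d u v = walkMax l p) (x y z : X) :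
    d x y ≤ max (d x z) (d z y) := by
  classical
  obtain rfl | hxy := eq_or_ne x y
  · exact hd0 x ▸ le_max_of_le_left (nonneg_of_eq_walkMax hT hd0 hd x z)
  obtain rfl | hxz := eq_or_ne x z
  · exact hd0 x ▸ le_max_right _ _
  obtain rfl | hzy := eq_or_ne z y
  · exact hd0 z ▸ le_max_left _ _
  obtain ⟨p, hp⟩ := hT.preconnected.exists_isPath x z
  obtain ⟨q, hq⟩ := hT.preconnected.exists_isPath z y
  rw [hd x y hxy _ (p.append q).bypass_isPath, hd x z hxz p hp, hd z y hzy q hq]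
  exact walkMax_bypass_append_le l p q

theorem pos_max_of_adj_of_eq_walkMax (hd : ∀ u v : X, u ≠ v → ∀ p : T.Walk u v, p.IsPath →
      d u v = walkMax l p) (hultra : IsUltrametricOn d) {u v : X} (huv : T.Adj u v) :
    0 < max (l u) (l v) := by
  obtain ⟨hnn, -, hzero, -⟩ := hultra
  have hpos : 0 < d u v := (hnn u v).lt_of_ne fun h ↦ huv.ne ((hzero u v).1 h.symm)
  rw [hd u v huv.ne _ huv.isPath_toWalk, walkMax_toWalk] at hpos
  simpa only [lt_max_iff, lt_irrefl, or_false] using hpos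

end LabelMetric

theorem stmt_0_general {X : Type*} (T : SimpleGraph X) (hT : T.IsTree)
    (l : X → ℝ) (d : X → X → ℝ)
    (hd0 : ∀ u, d u u = 0)
    (hd : ∀ u v : X, u ≠ v → ∀ p : T.Walk u v, p.IsPath → d u v = walkMax l p) :
    IsUltrametricOn d ↔ ∀ u v : X, T.Adj u v → 0 < max (l u) (l v) :=
  ⟨fun h _ _ huv ↦ pos_max_of_adj_of_eq_walkMax hd h huv, fun hedge ↦
    ⟨nonneg_of_eq_walkMax hT.connected hd0 hd, symm_of_eq_walkMax hT.connected hd,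
      eq_zero_iff_of_eq_walkMax hT.connected hd0 hd hedge,
      le_max_of_eq_walkMax hT.connected hd0 hd⟩⟩

/-- Let `T` be a tree with vertex set `X`, `l : X → [0,∞)` a labeling, and let `d`
satisfy `d u u = 0` and `d u v = max{l w : w on the path joining u and v}` for `u ≠ v`
(i.e. `d = d_l`). Then `d_l` is an ultrametric on `X` iff `max{l u, l v} > 0` for
every edge `{u, v}` of `T`. -/
theorem stmt_0 {X : Type*} (T : SimpleGraph X) (hT : T.IsTree)
    (l : X → ℝ) (hl : ∀ x, 0 ≤ l x) (d : X → X → ℝ)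
    (hd0 : ∀ u, d u u = 0)
    (hd : ∀ u v : X, u ≠ v → ∀ p : T.Walk u v, p.IsPath → d u v = walkMax l p) :
    IsUltrametricOn d ↔ ∀ u v : X, T.Adj u v → 0 < max (l u) (l v) :=
  stmt_0_general T hT l d hd0 hd
end

section
/- Let (X,d) be a bounded ultrametric space with at least two points, and suppose the diametrical graph G_{X,d} is nonempty, i.e., there exist distinct u, v ∈ X with d(u,v) = diam X. Then G_{X,d} is a complete multipartite graph; equivalently, the non-adjacency relation (u not adjacent to v iff u = v or d(u,v) < diam X) is transitive on X. -/
/-- In a bounded ultrametric space with at least two points and nonempty diametrical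
graph, the non-adjacency relation of the diametrical graph is transitive, i.e. the
diametrical graph is complete multipartite. -/
theorem stmt_2 {X : Type*} (d : X → X → ℝ) (hd : IsUltrametricOn d)
    (hbdd : ∃ C : ℝ, ∀ x y : X, d x y ≤ C)
    (h2 : ∃ x y : X, x ≠ y)
    (hne : ∃ u v : X, u ≠ v ∧ d u v = setDiam d Set.univ) :
    ∀ x y z : X,
      (x = y ∨ d x y < setDiam d Set.univ) →
      (y = z ∨ d y z < setDiam d Set.univ) →
      (x = z ∨ d x z < setDiam d Set.univ) := by
  obtain ⟨_, _, _, hult⟩ := hd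
  intro x y z hxy hyz
  rcases hxy with rfl | hxy
  · exact hyz
  rcases hyz with rfl | hyz
  · exact Or.inr hxy
  · exact Or.inr (lt_of_le_of_lt (hult x z y) (max_lt hxy hyz))
end

section
/- Let (Y,ρ) be a bounded ultrametric space with at least two points whose diametrical graph G_{Y,ρ} is nonempty, i.e., there exist distinct u, v ∈ Y with ρ(u,v) = diam Y. Then the following are equivalent: (1) Y itself is a centered sphere in (Y,ρ); (2) there exists a point c ∈ Y such that ρ(x,c) = diam Y for every x ∈ Y with x ≠ c (equivalently, G_{Y,ρ} contains a spanning star, equivalently some part of the complete multipartite graph G_{Y,ρ} is a singleton). -/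
/-- For a bounded ultrametric space `(Y, ρ)` with at least two points and nonempty
diametrical graph: `Y` is a centered sphere in `(Y, ρ)` iff there exists `c ∈ Y` with
`ρ x c = diam Y` for all `x ≠ c`. -/
theorem stmt_4 {Y : Type*} (ρ : Y → Y → ℝ) (hρ : IsUltrametricOn ρ)
    (hbdd : ∃ C : ℝ, ∀ x y : Y, ρ x y ≤ C)
    (h2 : ∃ x y : Y, x ≠ y)
    (hne : ∃ u v : Y, u ≠ v ∧ ρ u v = setDiam ρ Set.univ) :
    IsCenteredSphereOf ρ (Set.univ : Set Y) ↔
      ∃ c : Y, ∀ x : Y, x ≠ c → ρ x c = setDiam ρ Set.univ := by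
  obtain ⟨hpos, hsymm, heq0, hstrong⟩ := hρ
  obtain ⟨C, hC⟩ := hbdd
  set D := setDiam ρ Set.univ with hD
  have hle : ∀ x y : Y, ρ x y ≤ D := by
    intro x y
    apply le_csSup
    · exact ⟨C, fun r ⟨a, _, b, _, hr⟩ => hr ▸ hC a b⟩
    · exact ⟨x, trivial, y, trivial, rfl⟩
  obtain ⟨u, v, huv, hρuv⟩ := hne
  constructor
  · rintro ⟨c, -, r, hr, hset⟩
    refine ⟨c, fun x hx => ?_⟩
    have hmem : ∀ x : Y, x ≠ c → ρ x c = r := by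
      intro x hx
      have : x ∈ ({x | ρ x c = r} ∪ {c} : Set Y) := hset ▸ Set.mem_univ x
      rcases this with h | h
      · exact h
      · exact absurd h hx
    have hxr : ρ x c = r := hmem x hx
    -- show r = D
    have hrD : r ≤ D := hxr ▸ hle x c
    have hDr : D ≤ r := by
      rw [← hρuv]
      by_cases hu : u = c
      · subst hu
        have : ρ v u = r := hmem v (Ne.symm huv)
        rw [hsymm]; exact le_of_eq this
      · by_cases hv : v = c
        · subst hv
          exact le_of_eq (hmem u huv)
        · calc ρ u v ≤ max (ρ u c) (ρ c v) := hstrong u v c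
            _ ≤ r := by
              rw [hmem u hu, hsymm c v, hmem v hv]; simp
    rw [hxr, le_antisymm hrD hDr]
  · rintro ⟨c, hc⟩
    refine ⟨c, trivial, D, ?_, ?_⟩
    · exact le_trans (hpos u v) (hρuv ▸ le_refl _)
    · ext x
      simp only [Set.mem_univ, true_iff, Set.mem_union, Set.mem_setOf_eq,
        Set.mem_singleton_iff]
      by_cases hx : x = c
      · exact Or.inr hx
      · exact Or.inl (hc x hx)
end

section
/- Let (X,d) be a bounded ultrametric space with at least two points whose diametrical graph G_{X,d} is nonempty, i.e., there exist distinct u, v ∈ X with d(u,v) = diam X. Then the relation x ~ y defined by d(x,y) < diam X is an equivalence relation on X, its equivalence classes are exactly the parts of the complete multipartite graph G_{X,d}, and for every c ∈ X the equivalence class of c equals the open ball B_{diam X}(c) = {x ∈ X : d(x,c) < diam X}; conversely, every open ball of radius diam X in (X,d) is such a part. -/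
/-- In a bounded ultrametric space with at least two points and nonempty diametrical
graph: `x ~ y ↔ d x y < diam X` is an equivalence relation, its classes are exactly
the parts of the complete multipartite diametrical graph (distinct points are adjacent
iff non-equivalent), and the class of each point `c` equals the open ball
`B_{diam X}(c)` (hence every open ball of radius `diam X` is such a part). -/
theorem stmt_5 {X : Type*} (d : X → X → ℝ) (hd : IsUltrametricOn d)
    (hbdd : ∃ C : ℝ, ∀ x y : X, d x y ≤ C)
    (h2 : ∃ x y : X, x ≠ y)
    (hne : ∃ u v : X, u ≠ v ∧ d u v = setDiam d Set.univ) :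
    Equivalence (fun x y : X => d x y < setDiam d Set.univ) ∧
    (∀ u v : X, (u ≠ v ∧ d u v = setDiam d Set.univ) ↔ ¬ d u v < setDiam d Set.univ) ∧
    (∀ c : X, {x : X | d x c < setDiam d Set.univ} = {x : X | d c x < setDiam d Set.univ}) := by
  obtain ⟨hnn, hsymm, hzero, hultra⟩ := hd
  obtain ⟨C, hC⟩ := hbdd
  set D := setDiam d Set.univ with hD
  have hbd : BddAbove {r | ∃ x ∈ (Set.univ : Set X), ∃ y ∈ Set.univ, r = d x y} := by
    refine ⟨C, ?_⟩
    rintro r ⟨x, -, y, -, rfl⟩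
    exact hC x y
  have hle : ∀ x y : X, d x y ≤ D := fun x y =>
    le_csSup hbd ⟨x, trivial, y, trivial, rfl⟩
  obtain ⟨u0, v0, huv0, hduv0⟩ := hne
  have hDpos : 0 < D := by
    rw [← hduv0]
    rcases lt_or_eq_of_le (hnn u0 v0) with h | h
    · exact h
    · exact absurd ((hzero u0 v0).mp h.symm) huv0
  refine ⟨⟨fun x => ?_, fun {x y} h => ?_, fun {x y z} h1 h2 => ?_⟩, fun u v => ?_, fun c => ?_⟩
  · have : d x x = 0 := (hzero x x).mpr rfl
    rw [this]; exact hDpos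
  · rwa [hsymm]
  · exact lt_of_le_of_lt (hultra x z y) (max_lt h1 h2)
  · constructor
    · rintro ⟨-, h⟩
      rw [h]; exact lt_irrefl _
    · intro h
      have heq : d u v = D := le_antisymm (hle u v) (not_lt.mp h)
      refine ⟨?_, heq⟩
      rintro rfl
      rw [(hzero u u).mpr rfl] at heq
      exact absurd heq.symm (ne_of_gt hDpos)
  · ext x; simp only [Set.mem_setOf_eq, hsymm x c]
end

section
/- Let (X,d) be a locally finite ultrametric space and let c ∈ X. Then the map B ↦ diam B is injective on the collection of open balls of (X,d) containing c; that is, if B₁ and B₂ are open balls of (X,d) with c ∈ B₁, c ∈ B₂ and diam B₁ = diam B₂, then B₁ = B₂. -/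
private lemma ball_finite {X : Type*} (d : X → X → ℝ) (hlf : IsLocallyFiniteOn d)
    (c : X) (r : ℝ) (hr : 0 < r) : Set.Finite {x | d c x < r} :=
  hlf _ ⟨c, r, hr, rfl⟩

private lemma diamSet_finite {X : Type*} (d : X → X → ℝ) {A : Set X} (hA : A.Finite) :
    Set.Finite {r | ∃ x ∈ A, ∃ y ∈ A, r = d x y} := by
  apply Set.Finite.subset ((hA.prod hA).image (fun p => d p.1 p.2))
  rintro r ⟨x, hx, y, hy, rfl⟩
  exact ⟨(x, y), ⟨hx, hy⟩, rfl⟩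

private lemma key {X : Type*} (d : X → X → ℝ) (hd : IsUltrametricOn d)
    (hlf : IsLocallyFiniteOn d) (c : X) {r₁ r₂ : ℝ} (hr₁ : 0 < r₁) (hr₂ : 0 < r₂)
    (hle : r₁ ≤ r₂)
    (hdiam : setDiam d {x | d c x < r₁} = setDiam d {x | d c x < r₂}) :
    ({x | d c x < r₁} : Set X) = {x | d c x < r₂} := by
  obtain ⟨hnn, hsymm, hzero, hultra⟩ := hd
  apply Set.Subset.antisymm
  · intro x hx; exact lt_of_lt_of_le hx hle
  · by_contra hsub
    rw [Set.not_subset] at hsub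
    obtain ⟨x, hx₂, hx₁⟩ := hsub
    simp only [Set.mem_setOf_eq, not_lt] at hx₂ hx₁
    have hcc : d c c = 0 := (hzero c c).2 rfl
    have hc₁ : c ∈ ({x | d c x < r₁} : Set X) := by simpa [hcc] using hr₁
    have hc₂ : c ∈ ({x | d c x < r₂} : Set X) := by simpa [hcc] using hr₂
    set S₁ := {r | ∃ a ∈ ({x | d c x < r₁} : Set X), ∃ b ∈ ({x | d c x < r₁} : Set X), r = d a b}
    set S₂ := {r | ∃ a ∈ ({x | d c x < r₂} : Set X), ∃ b ∈ ({x | d c x < r₂} : Set X), r = d a b}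
    have hS₁fin : S₁.Finite := diamSet_finite d (ball_finite d hlf c r₁ hr₁)
    have hS₂fin : S₂.Finite := diamSet_finite d (ball_finite d hlf c r₂ hr₂)
    have hS₁ne : S₁.Nonempty := ⟨0, c, hc₁, c, hc₁, hcc.symm⟩
    have hmem : sSup S₁ ∈ S₁ := hS₁ne.csSup_mem hS₁fin
    have hlt : sSup S₁ < r₁ := by
      obtain ⟨a, ha, b, hb, heq⟩ := hmem
      rw [heq]
      calc d a b ≤ max (d a c) (d c b) := hultra a b c
        _ < r₁ := max_lt (by rw [hsymm a c]; exact ha) hb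
    have hdx : d c x ∈ S₂ := ⟨c, hc₂, x, hx₂, rfl⟩
    have hge : d c x ≤ sSup S₂ := le_csSup hS₂fin.bddAbove hdx
    have : sSup S₁ < sSup S₂ := lt_of_lt_of_le (lt_of_lt_of_le hlt hx₁) hge
    rw [setDiam, setDiam] at hdiam
    exact absurd hdiam this.ne

private lemma recenter {X : Type*} (d : X → X → ℝ) (hd : IsUltrametricOn d)
    {c₀ c : X} {r : ℝ} (hc : d c₀ c < r) :
    ({x | d c₀ x < r} : Set X) = {x | d c x < r} := by
  obtain ⟨hnn, hsymm, hzero, hultra⟩ := hd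
  ext x
  simp only [Set.mem_setOf_eq]
  constructor
  · intro hx
    calc d c x ≤ max (d c c₀) (d c₀ x) := hultra c x c₀
      _ < r := max_lt (by rw [hsymm c c₀]; exact hc) hx
  · intro hx
    calc d c₀ x ≤ max (d c₀ c) (d c x) := hultra c₀ x c
      _ < r := max_lt hc hx

/-- In a locally finite ultrametric space, the map `B ↦ diam B` is injective on the
collection of open balls containing a given point `c`. -/
theorem stmt_8 {X : Type*} (d : X → X → ℝ) (hd : IsUltrametricOn d)
    (hlf : IsLocallyFiniteOn d) (c : X)
    (B₁ B₂ : Set X) (h₁ : IsOpenBallOf d B₁) (h₂ : IsOpenBallOf d B₂)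
    (hc₁ : c ∈ B₁) (hc₂ : c ∈ B₂)
    (hdiam : setDiam d B₁ = setDiam d B₂) : B₁ = B₂ := by
  obtain ⟨c₁, r₁, hr₁, hB₁⟩ := h₁
  obtain ⟨c₂, r₂, hr₂, hB₂⟩ := h₂
  subst hB₁ hB₂
  rw [recenter d hd hc₁] at *
  rw [recenter d hd hc₂] at *
  rcases le_total r₁ r₂ with h | h
  · exact key d hd hlf c hr₁ hr₂ h hdiam
  · exact (key d hd hlf c hr₂ hr₁ h hdiam.symm).symm
end

section
/- Let (X,d) be an infinite locally finite ultrametric space and let c ∈ X. Then there is a sequence (Bₙ)_{n≥1} of open balls of (X,d) such that {Bₙ : n ≥ 1} is exactly the collection of all open balls of (X,d) containing c, diam Bₙ < diam B_{n+1} for every n ≥ 1, and diam Bₙ → ∞ as n → ∞. -/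
/-- In an infinite locally finite ultrametric space, for every point `c` there is a
sequence `(B n)` of open balls which enumerates exactly the open balls containing `c`,
with strictly increasing diameters tending to infinity. -/
theorem stmt_9 {X : Type*} (d : X → X → ℝ) (hd : IsUltrametricOn d)
    (hlf : IsLocallyFiniteOn d) (hinf : Infinite X) (c : X) :
    ∃ B : ℕ → Set X,
      (∀ n : ℕ, IsOpenBallOf d (B n) ∧ c ∈ B n) ∧
      (∀ A : Set X, IsOpenBallOf d A → c ∈ A → ∃ n : ℕ, A = B n) ∧
      (∀ n : ℕ, setDiam d (B n) < setDiam d (B (n + 1))) ∧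
      Filter.Tendsto (fun n : ℕ => setDiam d (B n)) Filter.atTop Filter.atTop := by
  obtain ⟨hnn, hsym, heq, htri⟩ := hd
  classical
  set E : Set ℝ := Set.range (fun x => d c x) with hE
  have h0E : (0 : ℝ) ∈ E := ⟨c, (heq c c).2 rfl⟩
  -- bounded parts of E are finite
  have hEfin : ∀ M : ℝ, (E ∩ Set.Iio M).Finite := by
    intro M
    rcases le_or_gt M 0 with hM | hM
    · have hemp : E ∩ Set.Iio M = ∅ := by
        ext r
        simp only [Set.mem_inter_iff, Set.mem_empty_iff_false, iff_false, not_and,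
          Set.mem_Iio, hE, Set.mem_range]
        rintro ⟨x, rfl⟩
        exact not_lt.2 (le_trans hM (hnn c x))
      rw [hemp]; exact Set.finite_empty
    · have hball : ({x | d c x < M} : Set X).Finite := hlf _ ⟨c, M, hM, rfl⟩
      have hsub : E ∩ Set.Iio M ⊆ (fun x => d c x) '' {x | d c x < M} := by
        rintro r ⟨⟨x, rfl⟩, hr⟩
        exact ⟨x, hr, rfl⟩
      exact (hball.image _).subset hsub
  -- E is unbounded above
  have hEub : ∀ a : ℝ, ∃ m ∈ E, a < m := by
    intro a
    by_contra h
    push_neg at h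
    have hball : ({x | d c x < max a 0 + 1} : Set X).Finite :=
      hlf _ ⟨c, max a 0 + 1, by positivity, rfl⟩
    have huniv : (Set.univ : Set X).Finite := by
      apply hball.subset
      intro x _
      have h1 : d c x ≤ a := h (d c x) ⟨x, rfl⟩
      have h2 : d c x ≤ max a 0 := le_trans h1 (le_max_left a 0)
      simpa using lt_of_le_of_lt h2 (lt_add_one _)
    exact Set.infinite_univ huniv
  -- existence of least element of E above any a
  have key : ∀ a : ℝ, ∃ m, m ∈ E ∧ a < m ∧ ∀ y ∈ E, a < y → m ≤ y := by
    intro a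
    obtain ⟨x0, hx0E, hx0⟩ := hEub a
    have hFfin : (E ∩ Set.Ioc a x0).Finite :=
      (hEfin (x0 + 1)).subset (fun r hr => ⟨hr.1, lt_of_le_of_lt hr.2.2 (lt_add_one _)⟩)
    have hFne : (E ∩ Set.Ioc a x0).Nonempty := ⟨x0, hx0E, hx0, le_refl _⟩
    obtain ⟨m, hm, hmin⟩ := Set.exists_min_image _ id hFfin hFne
    refine ⟨m, hm.1, hm.2.1, ?_⟩
    intro y hyE hay
    rcases le_or_gt y x0 with h | h
    · exact hmin y ⟨hyE, hay, h⟩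
    · exact le_trans hm.2.2 h.le
  choose next hnextE hnextGT hnextMin using key
  set e : ℕ → ℝ := fun n => Nat.rec 0 (fun _ a => next a) n with he
  have heS : ∀ n, e (n + 1) = next (e n) := fun n => rfl
  have he0 : e 0 = 0 := rfl
  have heE : ∀ n, e n ∈ E := by
    intro n
    cases n with
    | zero => exact h0E
    | succ k => rw [heS]; exact hnextE _
  have heMono : StrictMono e := by
    apply strictMono_nat_of_lt_succ
    intro n
    rw [heS]
    exact hnextGT _
  have heNN : ∀ n, 0 ≤ e n := by
    intro n
    rw [← he0]
    exact heMono.monotone (Nat.zero_le n)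
  have heGap : ∀ n, ∀ y ∈ E, e n < y → e (n + 1) ≤ y := by
    intro n y hy hlt
    rw [heS]
    exact hnextMin _ y hy hlt
  -- the sequence of balls
  set B : ℕ → Set X := fun n => {x | d c x ≤ e n} with hB
  have hBall : ∀ n, B n = {x | d c x < e (n + 1)} := by
    intro n
    ext x
    simp only [hB, Set.mem_setOf_eq]
    constructor
    · intro h; exact lt_of_le_of_lt h (heMono (Nat.lt_succ_self n))
    · intro h
      by_contra hc
      push_neg at hc
      exact absurd h (not_lt.2 (heGap n (d c x) ⟨x, rfl⟩ hc))
  have hcB : ∀ n, c ∈ B n := by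
    intro n
    simp only [hB, Set.mem_setOf_eq, (heq c c).2 rfl]
    exact heNN n
  -- diameters
  have hdiam : ∀ n, setDiam d (B n) = e n := by
    intro n
    obtain ⟨xn, hxn⟩ := heE n
    have hxnB : xn ∈ B n := by simp only [hB, Set.mem_setOf_eq, ← hxn]; exact le_rfl
    have hub : ∀ r ∈ {r | ∃ x ∈ B n, ∃ y ∈ B n, r = d x y}, r ≤ e n := by
      rintro r ⟨x, hx, y, hy, rfl⟩
      calc d x y ≤ max (d x c) (d c y) := htri x y c
        _ ≤ e n := max_le (by rw [hsym]; exact hx) hy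
    have hmem : e n ∈ {r | ∃ x ∈ B n, ∃ y ∈ B n, r = d x y} :=
      ⟨c, hcB n, xn, hxnB, hxn.symm⟩
    exact le_antisymm (csSup_le ⟨e n, hmem⟩ hub) (le_csSup ⟨e n, hub⟩ hmem)
  refine ⟨B, fun n => ⟨⟨c, e (n + 1), lt_of_le_of_lt (heNN n) (heMono (Nat.lt_succ_self n)),
      hBall n⟩, hcB n⟩, ?_, ?_, ?_⟩
  · -- completeness
    rintro A ⟨a, r, hr, rfl⟩ hcA
    have hcA' : d a c < r := hcA
    have hAc : {x | d a x < r} = {x | d c x < r} := by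
      ext x
      simp only [Set.mem_setOf_eq]
      constructor
      · intro h
        calc d c x ≤ max (d c a) (d a x) := htri c x a
          _ < r := max_lt (by rw [hsym]; exact hcA') h
      · intro h
        calc d a x ≤ max (d a c) (d c x) := htri a x c
          _ < r := max_lt hcA' h
    have hAfin : ({x | d a x < r} : Set X).Finite := hlf _ ⟨a, r, hr, rfl⟩
    obtain ⟨x0, hx0A, hx0max⟩ :=
      Set.exists_max_image {x | d a x < r} (fun x => d c x) hAfin ⟨c, hcA'⟩
    set ρ := d c x0 with hρ
    have hρlt : ρ < r := by
      have : x0 ∈ {x | d c x < r} := hAc ▸ hx0A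
      exact this
    have hAeq : {x | d a x < r} = {x | d c x ≤ ρ} := by
      rw [hAc]
      ext x
      simp only [Set.mem_setOf_eq]
      constructor
      · intro h
        exact hx0max x (by rw [hAc] at *; exact h)
      · intro h
        exact lt_of_le_of_lt h hρlt
    -- find n with e n = ρ
    have hρE : ρ ∈ E := ⟨x0, rfl⟩
    have hρNN : 0 ≤ ρ := hnn c x0
    set K : Set ℕ := {n | e n ≤ ρ} with hK
    have hKne : K.Nonempty := ⟨0, by rw [hK]; simpa [he0] using hρNN⟩
    have hKfin : K.Finite := by
      have hsub : K ⊆ e ⁻¹' (E ∩ Set.Iio (ρ + 1)) := by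
        intro n hn
        have hn' : e n ≤ ρ := hn
        exact ⟨heE n, Set.mem_Iio.mpr (lt_of_le_of_lt hn' (lt_add_one ρ))⟩
      exact ((hEfin (ρ + 1)).preimage (heMono.injective.injOn)).subset hsub
    set N := sSup K with hN
    have hNK : N ∈ K := hKne.csSup_mem hKfin
    have hN1 : N + 1 ∉ K := by
      intro h
      have := le_csSup hKfin.bddAbove h
      omega
    have heNρ : e N = ρ := by
      have hNK' : e N ≤ ρ := hNK
      rcases lt_or_eq_of_le hNK' with h | h
      · exact absurd (heGap N ρ hρE h) (by simpa [hK] using hN1)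
      · exact h
    refine ⟨N, ?_⟩
    rw [hAeq, ← heNρ]
  · intro n
    rw [hdiam n, hdiam (n + 1)]
    exact heMono (Nat.lt_succ_self n)
  · have : Filter.Tendsto e Filter.atTop Filter.atTop := by
      apply heMono.monotone.tendsto_atTop_atTop
      intro M
      obtain ⟨N0, hN0⟩ := (((hEfin M).preimage heMono.injective.injOn).subset
        (fun n (hn : e n < M) => (⟨heE n, hn⟩ : e n ∈ E ∩ Set.Iio M))).bddAbove
      refine ⟨N0 + 1, ?_⟩
      by_contra h
      push_neg at h
      have : N0 + 1 ≤ N0 := hN0 (h : e (N0 + 1) < M)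
      omega
    simpa only [hdiam] using this
end

section
/- Let (X,d) be a nonempty ultrametric space with at most 3 points. Then (X,d) belongs to the class UGVL, and every open ball of (X,d) is a centered sphere of (X,d). -/
/-! With at most three points, let `b, a` be a closest pair. Every pair `u ≠ v` of points other
than `b` contains `a`, so the isosceles property of ultrametrics gives
`d u v = max (d b u) (d b v)`; hence `d` is generated by the star centred at `b` labelled by
`d b`. A ball has at most three points, and one of them is equidistant from the others (the apex
of an isosceles triangle); the ball is the sphere about this point through the others. -/

def IsStarCenter {X : Type*} (d : X → X → ℝ) (b : X) : Prop :=
  ∀ u v, u ≠ v → d u v = max (d b u) (d b v)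

namespace IsUltrametricOn

variable {X : Type*} {d : X → X → ℝ}

lemma nonneg (hd : IsUltrametricOn d) (x y : X) : 0 ≤ d x y := hd.1 x y

lemma symm (hd : IsUltrametricOn d) (x y : X) : d x y = d y x := hd.2.1 x y

lemma eq_zero_iff (hd : IsUltrametricOn d) {x y : X} : d x y = 0 ↔ x = y := hd.2.2.1 x y

lemma self_eq_zero (hd : IsUltrametricOn d) (x : X) : d x x = 0 := hd.eq_zero_iff.2 rfl

lemma le_max (hd : IsUltrametricOn d) (x y z : X) : d x y ≤ max (d x z) (d z y) :=
  hd.2.2.2 x y z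

lemma eq_of_le_of_le (hd : IsUltrametricOn d) {a b v : X} (hv : d b a ≤ d b v)
    (ha : d b a ≤ d a v) : d a v = d b v :=
  le_antisymm ((hd.le_max a v b).trans (max_le (hd.symm a b ▸ hv) le_rfl))
    ((hd.le_max b v a).trans (max_le ha le_rfl))

lemma isosceles (hd : IsUltrametricOn d) (x y z : X) :
    d x z = d y z ∨ d y x = d z x ∨ d x y = d z y := by
  rcases le_total (d x y) (d x z) with hxz | hzx
  · rcases le_total (d x y) (d y z) with hyz | hzy
    · exact Or.inl (hd.eq_of_le_of_le hxz hyz).symm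
    · exact Or.inr (Or.inl (hd.eq_of_le_of_le (hd.symm y x ▸ hzy)
        (hd.symm z x ▸ hzy.trans hxz)).symm)
  · rcases le_total (d x z) (d y z) with hyz | hzy
    · exact Or.inr (Or.inr (hd.eq_of_le_of_le hzx (hd.symm z y ▸ hyz)).symm)
    · exact Or.inr (Or.inl (hd.eq_of_le_of_le (hd.symm y x ▸ hzy.trans hzx)
        (hd.symm z x ▸ hzy)).symm)

lemma exists_isStarCenter [Finite X] [Nonempty X] (hd : IsUltrametricOn d)
    (hcard : Nat.card X ≤ 3) : ∃ b, IsStarCenter d b := by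
  by_cases hX : Subsingleton X
  · obtain ⟨b⟩ := ‹Nonempty X›
    exact ⟨b, fun u v huv => absurd (Subsingleton.elim u v) huv⟩
  obtain ⟨x, y, hxy⟩ := not_subsingleton_iff_nontrivial.1 hX
  have : Nonempty {p : X × X // p.1 ≠ p.2} := ⟨⟨(x, y), hxy⟩⟩
  obtain ⟨⟨⟨b, a⟩, hba⟩, hmin⟩ :=
    Finite.exists_min fun p : {p : X × X // p.1 ≠ p.2} => d p.1.1 p.1.2
  refine ⟨b, fun u v huv => ?_⟩
  by_cases hu : u = b
  · rw [hu, hd.self_eq_zero, max_eq_right (hd.nonneg b v)]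
  by_cases hv : v = b
  · rw [hv, hd.self_eq_zero, max_eq_left (hd.nonneg b u), hd.symm]
  have hau : a = u ∨ a = v := by
    by_contra! h
    have := Fintype.ofFinite X
    have hnd : [a, b, u, v].Nodup := by simp [*, Ne.symm hba, Ne.symm hu, Ne.symm hv]
    have h4 : 4 ≤ Nat.card X := by simpa [Nat.card_eq_fintype_card] using hnd.length_le_card
    omega
  rcases hau with rfl | rfl
  · have hv' : d b a ≤ d b v := hmin ⟨(b, v), Ne.symm hv⟩
    rw [hd.eq_of_le_of_le hv' (hmin ⟨(a, v), huv⟩), max_eq_right hv']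
  · have hu' : d b a ≤ d b u := hmin ⟨(b, u), Ne.symm hu⟩
    rw [hd.symm u a, hd.eq_of_le_of_le hu' (hmin ⟨(a, u), Ne.symm huv⟩), max_eq_left hu']

lemma exists_equidistant_of_encard_le_three (hd : IsUltrametricOn d) {A : Set X}
    (hA : A.Nonempty) (h3 : A.encard ≤ 3) :
    ∃ p ∈ A, ∃ s, ∀ x ∈ A, x ≠ p → d x p = s := by
  have apex : ∀ x y z : X, d x z = d y z →
      ∃ s, ∀ w ∈ ({x, y, z} : Set X), w ≠ z → d w z = s := by
    rintro x y z h
    refine ⟨d x z, ?_⟩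
    simp only [Set.mem_insert_iff, Set.mem_singleton_iff]
    rintro w (rfl | rfl | rfl) hw
    exacts [rfl, h.symm, absurd rfl hw]
  obtain ⟨n, hn⟩ : ∃ n : ℕ, A.encard = n :=
    ⟨A.ncard, (Set.finite_of_encard_le_coe h3).cast_ncard_eq.symm⟩
  have hn1 : 1 ≤ n := by
    by_contra! h0
    simp [Nat.lt_one_iff.1 h0, hA.ne_empty] at hn
  have hn3 : n ≤ 3 := by exact_mod_cast hn ▸ h3
  interval_cases n
  · obtain ⟨a, rfl⟩ := Set.encard_eq_one.1 (by exact_mod_cast hn)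
    exact ⟨a, rfl, 0, fun x hx hxa => absurd hx hxa⟩
  · obtain ⟨a, b, -, rfl⟩ := Set.encard_eq_two.1 (by exact_mod_cast hn)
    refine ⟨a, by simp, d b a, ?_⟩
    simp only [Set.mem_insert_iff, Set.mem_singleton_iff]
    rintro x (rfl | rfl) hx
    exacts [absurd rfl hx, rfl]
  · obtain ⟨x, y, z, -, -, -, rfl⟩ := Set.encard_eq_three.1 (by exact_mod_cast hn)
    rcases hd.isosceles x y z with h | h | h
    · exact ⟨z, by simp, apex x y z h⟩
    · rw [Set.insert_comm x y, Set.pair_comm x z]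
      exact ⟨x, by simp, apex y z x h⟩
    · rw [Set.pair_comm y z]
      exact ⟨y, by simp, apex x z y h⟩

lemma isCenteredSphereOf_ball (hd : IsUltrametricOn d) {c p : X} {r s : ℝ}
    (hp : d c p < r) (hs : ∀ x, d c x < r → x ≠ p → d x p = s) :
    IsCenteredSphereOf d {x | d c x < r} := by
  by_cases hq : ∃ q, d c q < r ∧ q ≠ p
  · obtain ⟨q, hq, hqp⟩ := hq
    have hsr : s < r := hs q hq hqp ▸ (hd.le_max q p c).trans_lt (max_lt (hd.symm q c ▸ hq) hp)
    refine ⟨p, hp, s, hs q hq hqp ▸ hd.nonneg q p, Set.ext fun x => ?_⟩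
    simp only [Set.mem_ofPred_eq, Set.mem_union, Set.mem_singleton_iff]
    refine ⟨fun hx => (eq_or_ne x p).symm.imp (hs x hx) id, ?_⟩
    rintro (hx | rfl)
    · exact (hd.le_max c x p).trans_lt (max_lt hp (hd.symm p x ▸ hx ▸ hsr))
    · exact hp
  · push Not at hq
    refine ⟨p, hp, 0, le_rfl, Set.ext fun x => ?_⟩
    simp only [Set.mem_ofPred_eq, Set.mem_union, Set.mem_singleton_iff, hd.eq_zero_iff, or_self]
    exact ⟨fun hx => hq x hx, fun hx => hx ▸ hp⟩

end IsUltrametricOn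

section

open SimpleGraph

variable {X : Type*} {d : X → X → ℝ}

lemma generatedBy_of_exists_path {T : SimpleGraph X} {l : X → ℝ} (hT : T.IsTree)
    (hl : ∀ x, 0 ≤ l x) (hd : ∀ u, d u u = 0)
    (hpath : ∀ u v, u ≠ v → ∃ p : T.Walk u v, p.IsPath ∧ d u v = walkMax l p) :
    GeneratedBy d T l := by
  refine ⟨hT, hl, hd, fun u v huv p hp => ?_⟩
  obtain ⟨q, hq, hdq⟩ := hpath u v huv
  obtain rfl : p = q :=
    congrArg Subtype.val ((hT.isAcyclic.subsingleton_path u v).elim ⟨p, hp⟩ ⟨q, hq⟩)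
  exact hdq

lemma generatedBy_starGraph (hd : IsUltrametricOn d) {b : X} (hb : IsStarCenter d b) :
    GeneratedBy d (starGraph b) (d b) := by
  refine generatedBy_of_exists_path (isTree_starGraph b) (hd.nonneg b) hd.self_eq_zero
    fun u v huv => ?_
  rw [hb u v huv]
  by_cases hu : u = b
  · subst hu
    refine ⟨.cons (starGraph_center_adj huv) .nil, by simp [huv], ?_⟩
    simp [walkMax, hd.self_eq_zero, hd.nonneg]
  by_cases hv : v = b
  · subst hv
    refine ⟨.cons (starGraph_center_adj' (Ne.symm hu)) .nil, by simp [huv], ?_⟩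
    simp [walkMax, hd.self_eq_zero, hd.nonneg]
  refine ⟨.cons (starGraph_center_adj' (Ne.symm hu)) (.cons (starGraph_center_adj (Ne.symm hv))
    .nil), by simp [huv, hu, Ne.symm hv], ?_⟩
  simp [walkMax, hd.self_eq_zero, hd.nonneg]

end

/-- Every nonempty ultrametric space with at most 3 points belongs to UGVL, and each
of its open balls is a centered sphere. -/
theorem stmt_10 {X : Type*} [Finite X] (hne : Nonempty X) (hcard : Nat.card X ≤ 3)
    (d : X → X → ℝ) (hd : IsUltrametricOn d) :
    IsUGVL d ∧ ∀ B : Set X, IsOpenBallOf d B → IsCenteredSphereOf d B := by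
  refine ⟨?_, ?_⟩
  · obtain ⟨b, hb⟩ := hd.exists_isStarCenter hcard
    exact ⟨SimpleGraph.starGraph b, d b, generatedBy_starGraph hd hb⟩
  · rintro _ ⟨c, r, hr, rfl⟩
    have hball : {x | d c x < r}.encard ≤ 3 :=
      Set.encard_le_card.trans (by rw [ENat.card_eq_coe_natCard]; exact_mod_cast hcard)
    obtain ⟨p, hp, s, hs⟩ :=
      hd.exists_equidistant_of_encard_le_three ⟨c, by simpa [hd.self_eq_zero]⟩ hball
    exact hd.isCenteredSphereOf_ball hp hs
end

section
/- Let X = {x, y, z, t} be a four-point set and define d : X × X → [0,∞) by d(p,p) = 0, d(x,z) = d(z,x) = d(y,t) = d(t,y) = 1, and d(p,q) = 2 for all other pairs of distinct points p, q. Then d is an ultrametric on X, and the ultrametric space (X,d) does not belong to the class UGVL. -/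
/-- The distance on the four-point set `{x, y, z, t} = Fin 4` with
`d(x,z) = d(y,t) = 1` and all other distances between distinct points equal to `2`. -/
noncomputable def dFour : Fin 4 → Fin 4 → ℝ := fun p q =>
  if p = q then 0
  else if (p = 0 ∧ q = 2) ∨ (p = 2 ∧ q = 0) ∨ (p = 1 ∧ q = 3) ∨ (p = 3 ∧ q = 1) then 1
  else 2

/- The distance realised by a labeled tree is at least the label of each endpoint, since the
endpoints lie on the path. So if every point has a neighbour at distance `≤ c`, all labels, and
hence all distances, are `≤ c`. In `dFour` every point has a partner at distance `1`, while
`dFour 0 1 = 2`. -/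

section walkMax

variable {X : Type*} {T : SimpleGraph X} {l : X → ℝ} {u v : X}

lemma le_walkMax_of_mem_support (p : T.Walk u v) {w : X} (hw : w ∈ p.support) :
    l w ≤ walkMax l p :=
  List.le_max_of_le' 0 (List.mem_map_of_mem hw) le_rfl

lemma walkMax_le {c : ℝ} (hc : 0 ≤ c) (hl : ∀ w, l w ≤ c) (p : T.Walk u v) :
    walkMax l p ≤ c := by
  unfold walkMax
  induction p.support with
  | nil => exact hc
  | cons a s ih => exact max_le (hl a) ih

end walkMax

namespace GeneratedBy

variable {X : Type*} {d : X → X → ℝ} {T : SimpleGraph X} {l : X → ℝ}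

lemma exists_dist_eq_walkMax (h : GeneratedBy d T l) {u v : X} (huv : u ≠ v) :
    ∃ p : T.Walk u v, d u v = walkMax l p := by
  classical
  obtain ⟨q⟩ := h.1.connected.preconnected u v
  exact ⟨q.bypass, h.2.2.2 u v huv q.bypass q.bypass_isPath⟩

lemma label_le_dist (h : GeneratedBy d T l) {u v : X} (huv : u ≠ v) : l u ≤ d u v := by
  obtain ⟨p, hp⟩ := h.exists_dist_eq_walkMax huv
  exact hp ▸ le_walkMax_of_mem_support p p.start_mem_support

lemma dist_le_of_forall_exists_dist_le (h : GeneratedBy d T l) {c : ℝ}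
    (hnear : ∀ u, ∃ v, v ≠ u ∧ d u v ≤ c) {u v : X} (huv : u ≠ v) : d u v ≤ c := by
  have hl : ∀ w, l w ≤ c := fun w ↦ by
    obtain ⟨w', hne, hw'⟩ := hnear w
    exact (h.label_le_dist hne.symm).trans hw'
  obtain ⟨p, hp⟩ := h.exists_dist_eq_walkMax huv
  exact hp ▸ walkMax_le ((h.2.1 u).trans (hl u)) hl p

end GeneratedBy

lemma isUltrametricOn_dFour : IsUltrametricOn dFour := by
  refine ⟨?_, ?_, ?_, ?_⟩
  · intro x y; fin_cases x <;> fin_cases y <;> simp +decide [dFour]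
  · intro x y; fin_cases x <;> fin_cases y <;> simp +decide [dFour]
  · intro x y; fin_cases x <;> fin_cases y <;> simp +decide [dFour]
  · intro x y z; fin_cases x <;> fin_cases y <;> fin_cases z <;> simp +decide [dFour]

lemma dFour_add_two (p : Fin 4) : dFour p (p + 2) = 1 := by
  fin_cases p <;> simp +decide [dFour]

lemma dFour_zero_one : dFour 0 1 = 2 := by
  simp +decide [dFour]

/-- `dFour` is an ultrametric on the four-point set, and the resulting ultrametric
space does not belong to the class UGVL. -/
theorem stmt_11 : IsUltrametricOn dFour ∧ ¬ IsUGVL dFour := by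
  refine ⟨isUltrametricOn_dFour, ?_⟩
  rintro ⟨T, l, h⟩
  have hpartner : ∀ p : Fin 4, ∃ q, q ≠ p ∧ dFour p q ≤ 1 := fun p ↦
    ⟨p + 2, by fin_cases p <;> decide, (dFour_add_two p).le⟩
  have h01 : dFour 0 1 ≤ 1 := h.dist_le_of_forall_exists_dist_le hpartner (by decide)
  linarith [dFour_zero_one]
end

section
/- Let (X,d) be a nonempty ultrametric space. Then the following statements are equivalent: (1) every centered sphere of (X,d) is an open ball of (X,d); (2) the metric d is discrete; (3) the collection of open balls of (X,d) coincides with the collection of centered spheres of (X,d). -/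
/-- For a nonempty ultrametric space `(X, d)` the following are equivalent:
(1) every centered sphere is an open ball; (2) the metric `d` is discrete;
(3) the open balls are exactly the centered spheres. -/
theorem stmt_16 {X : Type*} (hne : Nonempty X)
    (d : X → X → ℝ) (hd : IsUltrametricOn d) :
    ((∀ C : Set X, IsCenteredSphereOf d C → IsOpenBallOf d C) ↔
      (∃ k : ℝ, 0 < k ∧ ∀ x y : X, x ≠ y → d x y = k)) ∧
    ((∃ k : ℝ, 0 < k ∧ ∀ x y : X, x ≠ y → d x y = k) ↔
      (∀ B : Set X, IsOpenBallOf d B ↔ IsCenteredSphereOf d B)) := by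
  obtain ⟨hnn, hsym, heq0, htri⟩ := hd
  -- discrete → balls are exactly spheres
  have disc_iff : (∃ k : ℝ, 0 < k ∧ ∀ x y : X, x ≠ y → d x y = k) →
      ∀ B : Set X, IsOpenBallOf d B ↔ IsCenteredSphereOf d B := by
    rintro ⟨k, hk, hdisc⟩ B
    constructor
    · rintro ⟨c, r, hr, rfl⟩
      by_cases hrk : r ≤ k
      · refine ⟨c, ?_, 0, le_refl 0, ?_⟩
        · show d c c < r
          rw [(heq0 c c).mpr rfl]; exact hr
        · ext x
          simp only [Set.mem_setOf_eq, Set.mem_union, Set.mem_singleton_iff]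
          constructor
          · intro hx
            by_cases hxc : x = c
            · exact Or.inr hxc
            · exact absurd hx (by rw [hdisc c x (fun h => hxc h.symm)]; linarith)
          · rintro (h1 | h2)
            · have hxc : x = c := (heq0 x c).mp h1
              subst hxc; rw [(heq0 x x).mpr rfl]; exact hr
            · subst h2; rw [(heq0 x x).mpr rfl]; exact hr
      · push_neg at hrk
        refine ⟨c, ?_, k, hk.le, ?_⟩
        · show d c c < r
          rw [(heq0 c c).mpr rfl]; exact hr
        · ext x
          simp only [Set.mem_setOf_eq, Set.mem_union, Set.mem_singleton_iff]
          by_cases hxc : x = c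
          · subst hxc
            simp only [(heq0 x x).mpr rfl]
            exact ⟨fun _ => Or.inr trivial, fun _ => hr⟩
          · constructor
            · intro _; exact Or.inl (hdisc x c hxc)
            · intro _; rw [hdisc c x (fun h => hxc h.symm)]; exact hrk
    · rintro ⟨c, hc, r, hr, rfl⟩
      by_cases hrk : r = k
      · subst hrk
        refine ⟨c, r + 1, by linarith, ?_⟩
        ext x
        simp only [Set.mem_setOf_eq, Set.mem_union, Set.mem_singleton_iff]
        by_cases hxc : x = c
        · subst hxc
          exact ⟨fun _ => by rw [(heq0 x x).mpr rfl]; linarith, fun _ => Or.inr rfl⟩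
        · constructor
          · intro _; rw [hdisc c x (fun h => hxc h.symm)]; linarith
          · intro _; exact Or.inl (hdisc x c hxc)
      · refine ⟨c, k, hk, ?_⟩
        ext x
        simp only [Set.mem_setOf_eq, Set.mem_union, Set.mem_singleton_iff]
        by_cases hxc : x = c
        · subst hxc
          exact ⟨fun _ => by rw [(heq0 x x).mpr rfl]; exact hk, fun _ => Or.inr rfl⟩
        · constructor
          · rintro (h1 | h2)
            · exact absurd h1 (by rw [hdisc x c hxc]; exact fun h => hrk h.symm)
            · exact absurd h2 hxc
          · intro hx
            exact absurd hx (by rw [hdisc c x (fun h => hxc h.symm)]; exact lt_irrefl k)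
  -- (1) → (2)
  have one_to_two : (∀ C : Set X, IsCenteredSphereOf d C → IsOpenBallOf d C) →
      ∃ k : ℝ, 0 < k ∧ ∀ x y : X, x ≠ y → d x y = k := by
    intro h
    by_cases hnt : ∃ a b : X, a ≠ b
    · obtain ⟨a, b, hab⟩ := hnt
      have key : ∀ c x z : X, x ≠ c → d c z < d x c → z = c := by
        intro c x z hxc hz
        obtain ⟨c', ρ, hρ, hball⟩ := h ({y | d y c = d x c} ∪ {c})
          ⟨c, Or.inr rfl, d x c, hnn x c, rfl⟩
        have hcball : c ∈ {y | d c' y < ρ} := by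
          rw [← hball]; exact Or.inr rfl
        have hxball : x ∈ {y | d c' y < ρ} := by
          rw [← hball]; exact Or.inl rfl
        have hxc' : d x c < ρ := by
          calc d x c ≤ max (d x c') (d c' c) := htri x c c'
          _ < ρ := max_lt (by rw [hsym x c']; exact hxball) hcball
        have hz' : z ∈ {y | d c' y < ρ} := by
          have h1 : d c' z ≤ max (d c' c) (d c z) := htri c' z c
          exact lt_of_le_of_lt h1 (max_lt hcball (hz.trans hxc'))
        rw [← hball] at hz'
        rcases hz' with h1 | h2
        · rw [hsym c z] at hz
          exact absurd h1 hz.ne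
        · exact h2
      have const : ∀ c x y : X, x ≠ c → y ≠ c → d x c = d y c := by
        intro c x y hxc hyc
        rcases lt_trichotomy (d x c) (d y c) with h1 | h1 | h1
        · exact absurd (key c y x hyc (by rw [hsym c x]; exact h1)) hxc
        · exact h1
        · exact absurd (key c x y hxc (by rw [hsym c y]; exact h1)) hyc
      refine ⟨d a b, lt_of_le_of_ne (hnn a b)
        (fun h' => hab ((heq0 a b).mp h'.symm)), ?_⟩
      intro x y hxy
      by_cases hya : y = a
      · subst hya
        calc d x y = d b y := const y x b hxy (fun h => hab h.symm)
        _ = d y b := hsym b y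
      · calc d x y = d a y := const y x a hxy (fun h => hya h.symm)
        _ = d y a := hsym a y
        _ = d b a := const a y b hya (fun h => hab h.symm)
        _ = d a b := hsym b a
    · push_neg at hnt
      exact ⟨1, one_pos, fun x y hxy => absurd (hnt x y) hxy⟩
  constructor
  · constructor
    · exact one_to_two
    · intro h2 C hC
      exact (disc_iff h2 C).mpr hC
  · constructor
    · exact disc_iff
    · intro h3
      exact one_to_two (fun C hC => (h3 C).mpr hC)
end
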